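/- arXiv:2203.13805 — 2 statements merged into one kernel-verified Lean document; each statement's English description precedes it below -/
import Mathlib

section
/- Pathwise Bessel comparison, Gronwall form (from the proof of Lemma 2.1 of the paper): let T > 0, let d, d' ∈ ℝ with d ≤ d', let x > 0, and let B : [0,T] → ℝ be continuous. Let Z be a pathwise Bessel-type solution of dimension d and Z' a pathwise Bessel-type solution of dimension d', both driven by B with initial value x, and suppose Z_t ≤ Z'_t for all t ∈ [0,T]. Set u := inf_{t ∈ [0,T]} Z_t and assume u > 0. Then 0 ≤ sup_{t ∈ [0,T]} (Z'_t − Z_t) ≤ exp(T·|1 − d'| / (2u²)) · ((d' − d)/2) · (T/u). -/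
/-!
Subtracting the two equations eliminates the driving path `B`:
`Z' - Z = ((d' - d)/2) ∫ Z⁻¹ + ((d' - 1)/2) ∫ (Z'⁻¹ - Z⁻¹)`.
The first term is at most `((d' - d)/2) (T/u)`, and since `u ≤ Z ≤ Z'` we have
`|Z'⁻¹ - Z⁻¹| ≤ (Z' - Z)/u²`, so the second is at most `(|1 - d'|/(2u²)) ∫ (Z' - Z)`.
Gronwall's inequality in integral form then bounds `Z' - Z` uniformly on `[0,T]`.
-/

open MeasureTheory intervalIntegral

/-- A pathwise Bessel-type solution of dimension `d` driven by a continuous function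
`B : [0,T] → ℝ` with initial value `x > 0`: a continuous positive function `Z` on `[0,T]`
satisfying `Z t = x + ((d-1)/2) ∫_0^t Z s⁻¹ ds + B t`. -/
def IsBesselSolution (T x d : ℝ) (B Z : ℝ → ℝ) : Prop :=
  ContinuousOn Z (Set.Icc 0 T) ∧ (∀ t ∈ Set.Icc 0 T, 0 < Z t) ∧
    ∀ t ∈ Set.Icc 0 T, Z t = x + (d - 1) / 2 * (∫ s in (0 : ℝ)..t, (Z s)⁻¹) + B t

open Set Real Topology

theorem le_mul_exp_of_le_add_mul_integral {f : ℝ → ℝ} {a b C K : ℝ} (hK : 0 ≤ K)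
    (hf : ContinuousOn f (Icc a b)) (hle : ∀ t ∈ Icc a b, f t ≤ C + K * ∫ s in a..t, f s) :
    ∀ t ∈ Icc a b, f t ≤ C * exp (K * (t - a)) := by
  intro t ht
  have hab : a ≤ b := ht.1.trans ht.2
  have hF : ContinuousOn (fun t => ∫ s in a..t, f s) (Icc a b) := by
    simpa only [uIcc_of_le hab] using
      continuousOn_primitive_interval' (hf.intervalIntegrable_of_Icc hab) left_mem_uIcc
  have hF' : ∀ r ∈ Ico a b, HasDerivWithinAt (fun t => ∫ s in a..t, f s) (f r) (Ici r) r := by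
    intro r hr
    have hIcc : Icc a b ∈ 𝓝[>] r := Icc_mem_nhdsGT_of_mem ⟨hr.1, hr.2⟩
    exact integral_hasDerivWithinAt_right
      ((hf.mono (Icc_subset_Icc_right hr.2.le)).intervalIntegrable_of_Icc hr.1)
      ⟨Icc a b, hIcc, hf.aestronglyMeasurable measurableSet_Icc⟩
      ((hf r (Ico_subset_Icc_self hr)).mono_of_mem_nhdsWithin hIcc)
  have hgronwall := le_gronwallBound_of_liminf_deriv_right_le (δ := 0) (K := K) (ε := C) hF
    (fun r hr _ hlt => by
      simpa only [slope_def_field, div_eq_inv_mul] using (hF' r hr).liminf_right_slope_le hlt)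
    (by simp) (fun r hr => by linarith [hle r (Ico_subset_Icc_self hr)]) t ht
  have hexp : C + K * gronwallBound 0 K C (t - a) = C * exp (K * (t - a)) := by
    rcases eq_or_ne K 0 with rfl | hK0
    · simp
    · rw [gronwallBound_of_K_ne_0 hK0]
      field_simp
      ring
  calc f t ≤ C + K * ∫ s in a..t, f s := hle t ht
    _ ≤ C + K * gronwallBound 0 K C (t - a) := by gcongr
    _ = C * exp (K * (t - a)) := hexp

theorem mul_inv_sub_inv_le_abs_div_sq_mul {a b c u : ℝ} (hu : 0 < u) (hua : u ≤ a)
    (hab : a ≤ b) :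
    c * (b⁻¹ - a⁻¹) ≤ |c| / u ^ 2 * (b - a) := by
  have ha : 0 < a := hu.trans_le hua
  have hb : 0 < b := ha.trans_le hab
  have habs : |b⁻¹ - a⁻¹| = (b - a) / (a * b) := by
    rw [abs_sub_comm, abs_of_nonneg (sub_nonneg.2 (inv_anti₀ ha hab))]
    field_simp
  calc c * (b⁻¹ - a⁻¹) ≤ |c| * |b⁻¹ - a⁻¹| := (le_abs_self _).trans (abs_mul _ _).le
    _ ≤ |c| * ((b - a) / u ^ 2) := by
      rw [habs]
      gcongr
      nlinarith
    _ = |c| / u ^ 2 * (b - a) := by ring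

namespace IsBesselSolution

variable {T x d d' u t : ℝ} {B Z Z' : ℝ → ℝ}

theorem intervalIntegrable (hZ : IsBesselSolution T x d B Z) (ht : t ∈ Icc 0 T) :
    IntervalIntegrable Z volume 0 t :=
  (hZ.1.mono (Icc_subset_Icc_right ht.2)).intervalIntegrable_of_Icc ht.1

theorem intervalIntegrable_inv (hZ : IsBesselSolution T x d B Z) (ht : t ∈ Icc 0 T) :
    IntervalIntegrable (fun s => (Z s)⁻¹) volume 0 t :=
  ((hZ.1.inv₀ fun s hs => (hZ.2.1 s hs).ne').mono
    (Icc_subset_Icc_right ht.2)).intervalIntegrable_of_Icc ht.1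

theorem integral_inv_le (hZ : IsBesselSolution T x d B Z) (hu : 0 < u)
    (huZ : ∀ s ∈ Icc 0 T, u ≤ Z s) (ht : t ∈ Icc 0 T) :
    ∫ s in (0 : ℝ)..t, (Z s)⁻¹ ≤ t / u := by
  have := integral_mono_on ht.1 (hZ.intervalIntegrable_inv ht) intervalIntegrable_const
    fun s hs => inv_anti₀ hu (huZ s ⟨hs.1, hs.2.trans ht.2⟩)
  simpa [div_eq_mul_inv] using this

theorem sub_eq (hZ : IsBesselSolution T x d B Z) (hZ' : IsBesselSolution T x d' B Z')
    (ht : t ∈ Icc 0 T) :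
    Z' t - Z t = (d' - d) / 2 * (∫ s in (0 : ℝ)..t, (Z s)⁻¹) +
      (d' - 1) / 2 * ∫ s in (0 : ℝ)..t, ((Z' s)⁻¹ - (Z s)⁻¹) := by
  rw [integral_sub (hZ'.intervalIntegrable_inv ht) (hZ.intervalIntegrable_inv ht),
    hZ.2.2 t ht, hZ'.2.2 t ht]
  ring

theorem sub_le_add_mul_integral_sub (hZ : IsBesselSolution T x d B Z)
    (hZ' : IsBesselSolution T x d' B Z') (hdd : d ≤ d') (hle : ∀ s ∈ Icc 0 T, Z s ≤ Z' s)
    (hu : 0 < u) (huZ : ∀ s ∈ Icc 0 T, u ≤ Z s) (ht : t ∈ Icc 0 T) :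
    Z' t - Z t ≤ (d' - d) / 2 * (T / u) +
      |1 - d'| / (2 * u ^ 2) * ∫ s in (0 : ℝ)..t, (Z' s - Z s) := by
  have hsub : ∀ s ∈ Icc 0 t, s ∈ Icc 0 T := fun s hs => ⟨hs.1, hs.2.trans ht.2⟩
  have hK : |1 - d'| / (2 * u ^ 2) = |(d' - 1) / 2| / u ^ 2 := by
    rw [abs_div, abs_two, abs_sub_comm]
    ring
  rw [hZ.sub_eq hZ' ht]
  gcongr ?_ + ?_
  · exact mul_le_mul_of_nonneg_left ((hZ.integral_inv_le hu huZ ht).trans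
      (div_le_div_of_nonneg_right ht.2 hu.le)) (by linarith)
  · rw [← intervalIntegral.integral_const_mul, ← intervalIntegral.integral_const_mul]
    refine integral_mono_on ht.1
      (((hZ'.intervalIntegrable_inv ht).sub (hZ.intervalIntegrable_inv ht)).const_mul _)
      (((hZ'.intervalIntegrable ht).sub (hZ.intervalIntegrable ht)).const_mul _) fun s hs => ?_
    rw [hK]
    exact mul_inv_sub_inv_le_abs_div_sq_mul hu (huZ s (hsub s hs)) (hle s (hsub s hs))

end IsBesselSolution

theorem bessel_comparison_gronwall_general (T d d' x : ℝ) (hT : 0 < T) (hdd : d ≤ d')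
    (B Z Z' : ℝ → ℝ)
    (hZ : IsBesselSolution T x d B Z) (hZ' : IsBesselSolution T x d' B Z')
    (hle : ∀ t ∈ Set.Icc 0 T, Z t ≤ Z' t)
    (u : ℝ) (hu : u = sInf (Z '' Set.Icc 0 T)) (hupos : 0 < u) :
    0 ≤ sSup ((fun t => Z' t - Z t) '' Set.Icc 0 T) ∧
      sSup ((fun t => Z' t - Z t) '' Set.Icc 0 T) ≤
        Real.exp (T * |1 - d'| / (2 * u ^ 2)) * ((d' - d) / 2) * (T / u) := by
  have huZ : ∀ s ∈ Icc 0 T, u ≤ Z s := fun s hs => by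
    rw [hu]
    exact csInf_le (isCompact_Icc.image_of_continuousOn hZ.1).bddBelow (mem_image_of_mem Z hs)
  have hbound : ∀ t ∈ Icc 0 T,
      Z' t - Z t ≤ exp (T * |1 - d'| / (2 * u ^ 2)) * ((d' - d) / 2) * (T / u) := fun t ht =>
    calc Z' t - Z t ≤ (d' - d) / 2 * (T / u) * exp (|1 - d'| / (2 * u ^ 2) * (t - 0)) :=
          le_mul_exp_of_le_add_mul_integral (by positivity) (hZ'.1.sub hZ.1)
            (fun s hs => hZ.sub_le_add_mul_integral_sub hZ' hdd hle hupos huZ hs) t ht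
      _ ≤ (d' - d) / 2 * (T / u) * exp (|1 - d'| / (2 * u ^ 2) * T) := by
          have hdd' : 0 ≤ d' - d := sub_nonneg.2 hdd
          gcongr
          linarith [ht.2]
      _ = exp (T * |1 - d'| / (2 * u ^ 2)) * ((d' - d) / 2) * (T / u) := by ring_nf
  have h0 : (0 : ℝ) ∈ Icc 0 T := left_mem_Icc.2 hT.le
  exact ⟨le_csSup_of_le ⟨_, forall_mem_image.2 hbound⟩ (mem_image_of_mem _ h0)
      (sub_nonneg.2 (hle 0 h0)),
    csSup_le (image_nonempty.2 ⟨0, h0⟩) (forall_mem_image.2 hbound)⟩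

/-- **Pathwise Bessel comparison, Gronwall form** (from the proof of Lemma 2.1): if `d ≤ d'`
and `Z ≤ Z'` are Bessel-type solutions of dimensions `d`, `d'` driven by the same continuous
`B` with the same initial value `x > 0`, and `u := inf_{[0,T]} Z > 0`, then
`0 ≤ sup_{[0,T]} (Z' - Z) ≤ exp(T|1-d'|/(2u²)) · ((d'-d)/2) · (T/u)`. -/
theorem bessel_comparison_gronwall (T d d' x : ℝ) (hT : 0 < T) (hdd : d ≤ d')
    (hx : 0 < x) (B Z Z' : ℝ → ℝ) (hB : ContinuousOn B (Set.Icc 0 T))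
    (hZ : IsBesselSolution T x d B Z) (hZ' : IsBesselSolution T x d' B Z')
    (hle : ∀ t ∈ Set.Icc 0 T, Z t ≤ Z' t)
    (u : ℝ) (hu : u = sInf (Z '' Set.Icc 0 T)) (hupos : 0 < u) :
    0 ≤ sSup ((fun t => Z' t - Z t) '' Set.Icc 0 T) ∧
      sSup ((fun t => Z' t - Z t) '' Set.Icc 0 T) ≤
        Real.exp (T * |1 - d'| / (2 * u ^ 2)) * ((d' - d) / 2) * (T / u) :=
  bessel_comparison_gronwall_general T d d' x hT hdd B Z Z' hZ hZ' hle u hu hupos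
end

section
/- Pathwise continuity of Bessel processes in their dimension (pathwise form of Lemma 2.1 of the paper): let T > 0, x > 0, u > 0, let B : [0,T] → ℝ be continuous, let (d_n) be a sequence of real numbers converging to d* ∈ ℝ, let Z^{(n)} be a pathwise Bessel-type solution of dimension d_n and Z* a pathwise Bessel-type solution of dimension d*, all driven by B with initial value x. Assume that Z^{(n)}_t ≥ u and Z*_t ≥ u for all n and all t ∈ [0,T], and that for each n the solutions are ordered compatibly with their dimensions: if d_n ≤ d* then Z^{(n)}_t ≤ Z*_t for all t, and if d* ≤ d_n then Z*_t ≤ Z^{(n)}_t for all t. Then sup_{t ∈ [0,T]} |Z^{(n)}_t − Z*_t| → 0 as n → ∞. -/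
open MeasureTheory Filter

/-!
Write `Y = Z - B`: then `Y` solves the ordinary differential equation
`Y' = ((d - 1) / 2) (Y + B)⁻¹`, so the rough driver only enters the vector field, not the
derivative. For the dimension `d*` this vector field is Lipschitz with constant
`|d* - 1| / (2 u²)` on the region `Y + B ≥ u`, and the solution for `d n` solves the same
equation up to an error `|d n - d*| / (2 u)`. Grönwall's inequality bounds `|Z n - Z*|`
uniformly on `[0, T]` by a quantity that vanishes with `|d n - d*|`.
-/

open Set

theorem hasDerivWithinAt_integral_Ici_of_continuousOn {E : Type*} [NormedAddCommGroup E]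
    [NormedSpace ℝ E] [CompleteSpace E] {f : ℝ → E} {a b t : ℝ}
    (hf : ContinuousOn f (Icc a b)) (ht : t ∈ Ico a b) :
    HasDerivWithinAt (fun s => ∫ x in a..s, f x) (f t) (Ici t) t :=
  intervalIntegral.integral_hasDerivWithinAt_right
    ((hf.mono (uIcc_of_le ht.1 ▸ Icc_subset_Icc_right ht.2.le)).intervalIntegrable)
    ((hf.stronglyMeasurableAtFilter_nhdsWithin measurableSet_Icc t).filter_mono
      (nhdsWithin_le_of_mem (Icc_mem_nhdsGT_of_mem ht)))
    ((hf t (Ico_subset_Icc_self ht)).mono_of_mem_nhdsWithin (Icc_mem_nhdsGT_of_mem ht))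

theorem lipschitzOnWith_const_mul_inv_add (c b : ℝ) {u : ℝ} (hu : 0 < u) :
    LipschitzOnWith (|c| / u ^ 2).toNNReal (fun y => c * (y + b)⁻¹) {y | u ≤ y + b} := by
  refine LipschitzOnWith.of_dist_le_mul fun y (hy : u ≤ y + b) z (hz : u ≤ z + b) => ?_
  have hy' : 0 < y + b := hu.trans_le hy
  have hz' : 0 < z + b := hu.trans_le hz
  have hprod : u ^ 2 ≤ (y + b) * (z + b) := sq u ▸ mul_le_mul hy hz hu.le hy'.le
  rw [Real.coe_toNNReal _ (by positivity), Real.dist_eq, Real.dist_eq, ← mul_sub,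
    inv_sub_inv hy'.ne' hz'.ne', abs_mul, abs_div, abs_of_pos (mul_pos hy' hz'),
    abs_sub_comm, add_sub_add_right_eq_sub, div_mul_eq_mul_div, mul_div_assoc]
  gcongr

namespace IsBesselSolution

variable {T x d u : ℝ} {B Z : ℝ → ℝ}

theorem sub_eqOn (h : IsBesselSolution T x d B Z) :
    EqOn (fun t => Z t - B t) (fun t => x + (d - 1) / 2 * ∫ s in (0 : ℝ)..t, (Z s)⁻¹) (Icc 0 T) :=
  fun t ht => by simp only [h.2.2 t ht]; ring

theorem continuousOn_inv (h : IsBesselSolution T x d B Z) :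
    ContinuousOn (fun t => (Z t)⁻¹) (Icc 0 T) :=
  h.1.inv₀ fun t ht => (h.2.1 t ht).ne'

theorem continuousOn_sub (h : IsBesselSolution T x d B Z) :
    ContinuousOn (fun t => Z t - B t) (Icc 0 T) := by
  rcases lt_or_ge T 0 with hT | hT
  · simp [Icc_eq_empty_of_lt hT]
  refine ContinuousOn.congr ?_ h.sub_eqOn
  exact (((intervalIntegral.continuousOn_primitive_interval'
    (h.continuousOn_inv.intervalIntegrable_of_Icc hT) left_mem_uIcc).mono
      Icc_subset_uIcc).const_smul ((d - 1) / 2)).const_add x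

theorem hasDerivWithinAt_sub (h : IsBesselSolution T x d B Z) {t : ℝ} (ht : t ∈ Ico 0 T) :
    HasDerivWithinAt (fun t => Z t - B t) ((d - 1) / 2 * (Z t)⁻¹) (Ici t) t :=
  (((hasDerivWithinAt_integral_Ici_of_continuousOn h.continuousOn_inv ht).const_mul _).const_add
    x).congr_of_eventuallyEq (eventuallyEq_of_mem (Icc_mem_nhdsGE_of_mem ht) h.sub_eqOn)
      (h.sub_eqOn (Ico_subset_Icc_self ht))

theorem abs_sub_le_gronwallBound {d₁ d₂ : ℝ} {Z₁ Z₂ : ℝ → ℝ}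
    (h₁ : IsBesselSolution T x d₁ B Z₁) (h₂ : IsBesselSolution T x d₂ B Z₂) (hu : 0 < u)
    (hZ₁ : ∀ t ∈ Icc 0 T, u ≤ Z₁ t) (hZ₂ : ∀ t ∈ Icc 0 T, u ≤ Z₂ t) :
    ∀ t ∈ Icc 0 T, |Z₁ t - Z₂ t| ≤
      gronwallBound 0 (|(d₂ - 1) / 2| / u ^ 2) (|d₁ - d₂| / (2 * u)) t := by
  intro t ht
  have h₀ : (0 : ℝ) ∈ Icc 0 T := ⟨le_rfl, ht.1.trans ht.2⟩
  have hdrift : ∀ t ∈ Ico 0 T,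
      dist ((d₁ - 1) / 2 * (Z₁ t)⁻¹) ((d₂ - 1) / 2 * (Z₁ t - B t + B t)⁻¹) ≤
        |d₁ - d₂| / (2 * u) := fun t ht => by
    have hZ := hZ₁ t (Ico_subset_Icc_self ht)
    rw [sub_add_cancel, Real.dist_eq, ← sub_mul, ← sub_div, sub_sub_sub_cancel_right, abs_mul,
      abs_div, abs_two, abs_inv, abs_of_pos (hu.trans_le hZ), ← div_div, div_eq_mul_inv _ u]
    gcongr
  have := dist_le_of_approx_trajectories_ODE_of_mem (s := fun t => {y | u ≤ y + B t})
    (εg := 0) (δ := 0)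
    (fun t _ => lipschitzOnWith_const_mul_inv_add ((d₂ - 1) / 2) (B t) hu)
    h₁.continuousOn_sub (fun t ht => h₁.hasDerivWithinAt_sub ht) hdrift
    (fun t ht => by simpa using hZ₁ t (Ico_subset_Icc_self ht))
    h₂.continuousOn_sub (fun t ht => h₂.hasDerivWithinAt_sub ht)
    (fun _ _ => by simp)
    (fun t ht => by simpa using hZ₂ t (Ico_subset_Icc_self ht))
    (by simp [h₁.sub_eqOn h₀, h₂.sub_eqOn h₀]) t ht
  rwa [Real.coe_toNNReal _ (by positivity), add_zero, sub_zero, Real.dist_eq,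
    sub_sub_sub_cancel_right] at this

end IsBesselSolution

theorem bessel_continuity_in_dimension_general (T x u : ℝ) (hu : 0 < u)
    (B : ℝ → ℝ)
    (d : ℕ → ℝ) (dstar : ℝ) (hd : Tendsto d atTop (nhds dstar))
    (Z : ℕ → ℝ → ℝ) (Zstar : ℝ → ℝ)
    (hZ : ∀ n, IsBesselSolution T x (d n) B (Z n))
    (hZstar : IsBesselSolution T x dstar B Zstar)
    (hlb : ∀ n, ∀ t ∈ Set.Icc 0 T, u ≤ Z n t)
    (hlbstar : ∀ t ∈ Set.Icc 0 T, u ≤ Zstar t) :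
    Tendsto (fun n => sSup ((fun t => |Z n t - Zstar t|) '' Set.Icc 0 T)) atTop (nhds 0) := by
  rcases lt_or_ge T 0 with hT | hT
  · simp [Icc_eq_empty_of_lt hT]
  set K := |(dstar - 1) / 2| / u ^ 2
  have hbound : ∀ n, ∀ t ∈ Icc 0 T,
      |Z n t - Zstar t| ≤ gronwallBound 0 K (|d n - dstar| / (2 * u)) T := fun n t ht =>
    ((hZ n).abs_sub_le_gronwallBound hZstar hu (hlb n) hlbstar t ht).trans
      (gronwallBound_mono le_rfl (by positivity) (by positivity) ht.2)
  have hbound_tendsto :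
      Tendsto (fun n => gronwallBound 0 K (|d n - dstar| / (2 * u)) T) atTop (nhds 0) := by
    have hε : Tendsto (fun n => |d n - dstar| / (2 * u)) atTop (nhds 0) := by
      simpa using ((hd.sub_const dstar).abs).div_const (2 * u)
    have := ((gronwallBound_continuous_ε 0 K T).tendsto 0).comp hε
    rwa [gronwallBound_ε0_δ0] at this
  refine squeeze_zero (fun n => Real.sSup_nonneg ?_) (fun n => Real.sSup_le ?_ ?_) hbound_tendsto
  · rintro _ ⟨t, -, rfl⟩
    exact abs_nonneg _
  · rintro _ ⟨t, ht, rfl⟩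
    exact hbound n t ht
  · exact (abs_nonneg _).trans (hbound n 0 ⟨le_rfl, hT⟩)

/-- **Pathwise continuity of Bessel processes in the dimension** (pathwise form of
Lemma 2.1): if `d n → d*`, the corresponding Bessel-type solutions `Z n` and `Z*` driven by
the same continuous `B` with the same initial value stay above `u > 0` on `[0,T]`, and the
solutions are ordered compatibly with their dimensions, then
`sup_{[0,T]} |Z n - Z*| → 0`. -/
theorem bessel_continuity_in_dimension (T x u : ℝ) (hT : 0 < T) (hx : 0 < x) (hu : 0 < u)
    (B : ℝ → ℝ) (hB : ContinuousOn B (Set.Icc 0 T))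
    (d : ℕ → ℝ) (dstar : ℝ) (hd : Tendsto d atTop (nhds dstar))
    (Z : ℕ → ℝ → ℝ) (Zstar : ℝ → ℝ)
    (hZ : ∀ n, IsBesselSolution T x (d n) B (Z n))
    (hZstar : IsBesselSolution T x dstar B Zstar)
    (hlb : ∀ n, ∀ t ∈ Set.Icc 0 T, u ≤ Z n t)
    (hlbstar : ∀ t ∈ Set.Icc 0 T, u ≤ Zstar t)
    (hord : ∀ n, (d n ≤ dstar → ∀ t ∈ Set.Icc 0 T, Z n t ≤ Zstar t) ∧
      (dstar ≤ d n → ∀ t ∈ Set.Icc 0 T, Zstar t ≤ Z n t)) :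
    Tendsto (fun n => sSup ((fun t => |Z n t - Zstar t|) '' Set.Icc 0 T)) atTop (nhds 0) :=
  bessel_continuity_in_dimension_general T x u hu B d dstar hd Z Zstar hZ hZstar hlb hlbstar
end
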